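/- (Proposition 4) For the compiled model M^λ built from M^R and M^H, set the costs of all robot and human-copy actions to 1, the costs of both flip actions to 0, the cost of each check agreement action to P1 = 0, and the cost of each check disagreement action to P2 > 2^{|F^R|+|F^H|}. If π^λ is a cost-optimal plan of M^λ under these costs, then the number of check disagreement actions in π^λ equals the minimal goal state divergence: |κ⁻(π^λ)| = GD↓(M^R, M^H). -/
import Mathlib


/-- A STRIPS-style action over fluent type `F`: positive/negative preconditions
and add/delete effects. -/
structure Act (F : Type) where
  prePos : Finset F
  preNeg : Finset F
  addE : Finset F
  delE : Finset F
deriving DecidableEq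

/-- A planning model `M = ⟨F, A, c, I, G⟩`. -/
structure PModel (F : Type) [DecidableEq F] where
  fluents : Finset F
  actions : Finset (Act F)
  cost : Act F → ℕ
  init : Finset F
  goal : Finset F

variable {F : Type} [DecidableEq F]

/-- Action `a` is executable in state `s`. -/
def execAct (s : Finset F) (a : Act F) : Prop :=
  a.prePos ⊆ s ∧ a.preNeg ∩ s = ∅

/-- Transition of one action. -/
def stepAct (s : Finset F) (a : Act F) : Finset F :=
  (s ∪ a.addE) \ a.delE

/-- Transition extended to action sequences. -/
def runSeq (s : Finset F) : List (Act F) → Finset F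
  | [] => s
  | a :: π => runSeq (stepAct s a) π

/-- The action sequence is executable in order from state `s`, using actions of `M`. -/
def ExecFrom (M : PModel F) : Finset F → List (Act F) → Prop
  | _, [] => True
  | s, a :: π => a ∈ M.actions ∧ execAct s a ∧ ExecFrom M (stepAct s a) π

/-- A plan for `M`: executable from the initial state and achieving the goal. -/
def IsPlan (M : PModel F) (π : List (Act F)) : Prop :=
  ExecFrom M M.init π ∧ M.goal ⊆ runSeq M.init π

/-- Cost of a plan. -/
def planCost (M : PModel F) (π : List (Act F)) : ℕ :=
  (π.map M.cost).sum

/-- Cost-optimal plan. -/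
def IsOptimal (M : PModel F) (π : List (Act F)) : Prop :=
  IsPlan M π ∧ ∀ π', IsPlan M π' → planCost M π ≤ planCost M π'

/-- Goal state divergence of plans `π1` of `M1` and `π2` of `M2`:
the symmetric difference of the two final states. -/
def GSD (M1 M2 : PModel F) (π1 π2 : List (Act F)) : Finset F :=
  (runSeq M1.init π1 \ runSeq M2.init π2) ∪ (runSeq M2.init π2 \ runSeq M1.init π1)

/-- All achievable values `|GSD(π1, M1, π2, M2)|` over pairs of valid plans. -/
def gsdVals (M1 M2 : PModel F) : Set ℕ :=
  { n | ∃ π1 π2, IsPlan M1 π1 ∧ IsPlan M2 π2 ∧ n = (GSD M1 M2 π1 π2).card }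

/-- Maximal (worst-case) goal state divergence `GD↑(M1, M2)`. -/
noncomputable def GDup (M1 M2 : PModel F) : ℕ := sSup (gsdVals M1 M2)

/-- Minimal (best-case) goal state divergence `GD↓(M1, M2)`. -/
noncomputable def GDdown (M1 M2 : PModel F) : ℕ := sInf (gsdVals M1 M2)

/-- Fluents of the compiled model `M^λ`: the robot copy `F^R`, the disjoint human copy
`F^H`, the housekeeping fluents `robot_can_act`/`human_can_act`, and one compare fluent
`f^κ` per original fluent. -/
inductive LF (F : Type) where
  | robot : F → LF F
  | human : F → LF F
  | robotCanAct : LF F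
  | humanCanAct : LF F
  | compare : F → LF F
deriving DecidableEq

variable {F : Type} [DecidableEq F] in
/-- A robot action of `M^R` lifted into the compiled model: expressed in the robot copy of
the fluents, with `robot_can_act` added as a positive precondition. -/
def liftR (a : Act F) : Act (LF F) where
  prePos := a.prePos.image LF.robot ∪ {LF.robotCanAct}
  preNeg := a.preNeg.image LF.robot
  addE := a.addE.image LF.robot
  delE := a.delE.image LF.robot

variable {F : Type} [DecidableEq F] in
/-- A human action of `M^H` lifted into the compiled model: expressed in the human copy of
the fluents, with `human_can_act` added as a positive precondition. -/
def liftH (a : Act F) : Act (LF F) where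
  prePos := a.prePos.image LF.human ∪ {LF.humanCanAct}
  preNeg := a.preNeg.image LF.human
  addE := a.addE.image LF.human
  delE := a.delE.image LF.human

variable {F : Type} [DecidableEq F] in
/-- The human flip action: requires the human copy of the goal and `human_can_act`;
deletes `human_can_act` and adds `robot_can_act`. -/
def flipH (MH : PModel F) : Act (LF F) where
  prePos := MH.goal.image LF.human ∪ {LF.humanCanAct}
  preNeg := ∅
  addE := {LF.robotCanAct}
  delE := {LF.humanCanAct}

variable {F : Type} [DecidableEq F] in
/-- The robot flip action: requires the robot goal and `robot_can_act`;
deletes `robot_can_act`. -/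
def flipR (MR : PModel F) : Act (LF F) where
  prePos := MR.goal.image LF.robot ∪ {LF.robotCanAct}
  preNeg := ∅
  addE := ∅
  delE := {LF.robotCanAct}

variable {F : Type} [DecidableEq F] in
/-- Check disagreement action `a^1_{f}`: fires when `f` holds for the robot but not in the
human copy; adds the compare fluent `f^κ`. -/
def chk1 (f : F) : Act (LF F) where
  prePos := {LF.robot f}
  preNeg := {LF.human f, LF.robotCanAct, LF.humanCanAct, LF.compare f}
  addE := {LF.compare f}
  delE := ∅

variable {F : Type} [DecidableEq F] in
/-- Check disagreement action `a^2_{f}`: fires when `f` holds in the human copy but not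
for the robot; adds the compare fluent `f^κ`. -/
def chk2 (f : F) : Act (LF F) where
  prePos := {LF.human f}
  preNeg := {LF.robot f, LF.robotCanAct, LF.humanCanAct, LF.compare f}
  addE := {LF.compare f}
  delE := ∅

variable {F : Type} [DecidableEq F] in
/-- Check agreement action `a^3_{f}`: fires when `f` holds in both copies; adds `f^κ`. -/
def chk3 (f : F) : Act (LF F) where
  prePos := {LF.robot f, LF.human f}
  preNeg := {LF.robotCanAct, LF.humanCanAct, LF.compare f}
  addE := {LF.compare f}
  delE := ∅

variable {F : Type} [DecidableEq F] in
/-- Check agreement action `a^4_{f}`: fires when `f` holds in neither copy; adds `f^κ`. -/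
def chk4 (f : F) : Act (LF F) where
  prePos := ∅
  preNeg := {LF.robot f, LF.human f, LF.robotCanAct, LF.humanCanAct, LF.compare f}
  addE := {LF.compare f}
  delE := ∅

variable {F : Type} [DecidableEq F] in
/-- The compiled model `M^λ` for the pair `⟨M^R, M^H⟩` (sharing fluent set `F = F^R`),
with cost function `c`: lifted robot and human actions, the two flip actions, and the four
check actions per fluent; initial state `I^R ∪ I^H ∪ {human_can_act}`; goal
`G^R ∪ G^H ∪ F^κ`. -/
def compiled (MR MH : PModel F) (c : Act (LF F) → ℕ) : PModel (LF F) where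
  fluents := MR.fluents.image LF.robot ∪ MR.fluents.image LF.human ∪
    {LF.robotCanAct, LF.humanCanAct} ∪ MR.fluents.image LF.compare
  actions := MR.actions.image liftR ∪ MH.actions.image liftH ∪
    {flipH MH, flipR MR} ∪ MR.fluents.image chk1 ∪ MR.fluents.image chk2 ∪
    MR.fluents.image chk3 ∪ MR.fluents.image chk4
  cost := c
  init := MR.init.image LF.robot ∪ MH.init.image LF.human ∪ {LF.humanCanAct}
  goal := MR.goal.image LF.robot ∪ MH.goal.image LF.human ∪ MR.fluents.image LF.compare

variable {F : Type} [DecidableEq F] in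
/-- `H(π^λ)`: the subsequence of human-copy actions appearing in `π^λ`. -/
def humanPart (MH : PModel F) (π : List (Act (LF F))) : List (Act (LF F)) :=
  π.filter (fun a => decide (a ∈ MH.actions.image liftH))

variable {F : Type} [DecidableEq F] in
/-- `R(π^λ)`: the subsequence of robot actions appearing in `π^λ`. -/
def robotPart (MR : PModel F) (π : List (Act (LF F))) : List (Act (LF F)) :=
  π.filter (fun a => decide (a ∈ MR.actions.image liftR))

variable {F : Type} [DecidableEq F] in
/-- `|κ⁻(π^λ)|`: the number of check disagreement actions occurring in `π^λ`. -/
def disCount (MR : PModel F) (π : List (Act (LF F))) : ℕ :=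
  π.countP (fun a => decide (∃ f ∈ MR.fluents, a = chk1 f ∨ a = chk2 f))

variable {F : Type} [DecidableEq F] in
/-- `|κ⁺(π^λ)|`: the number of check agreement actions occurring in `π^λ`. -/
def agrCount (MR : PModel F) (π : List (Act (LF F))) : ℕ :=
  π.countP (fun a => decide (∃ f ∈ MR.fluents, a = chk3 f ∨ a = chk4 f))

variable {F : Type} [DecidableEq F] in
/-- A well-formed planning model: initial state, goal, and all action components are
contained in the fluent set. -/
def WellFormed (M : PModel F) : Prop :=
  M.init ⊆ M.fluents ∧ M.goal ⊆ M.fluents ∧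
  ∀ a ∈ M.actions,
    a.prePos ⊆ M.fluents ∧ a.preNeg ⊆ M.fluents ∧
    a.addE ⊆ M.fluents ∧ a.delE ⊆ M.fluents


set_option linter.unusedSectionVars false
variable {F : Type} [DecidableEq F] [Fintype F]

def projR (s : Finset (LF F)) : Finset F := Finset.univ.filter (fun f => LF.robot f ∈ s)
def projH (s : Finset (LF F)) : Finset F := Finset.univ.filter (fun f => LF.human f ∈ s)
def projK (s : Finset (LF F)) : Finset F := Finset.univ.filter (fun f => LF.compare f ∈ s)

@[simp] lemma mem_projR {s : Finset (LF F)} {f : F} : f ∈ projR s ↔ LF.robot f ∈ s := by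
  simp [projR]
@[simp] lemma mem_projH {s : Finset (LF F)} {f : F} : f ∈ projH s ↔ LF.human f ∈ s := by
  simp [projH]
@[simp] lemma mem_projK {s : Finset (LF F)} {f : F} : f ∈ projK s ↔ LF.compare f ∈ s := by
  simp [projK]

lemma imageR_subset {t : Finset F} {s : Finset (LF F)} :
    t.image LF.robot ⊆ s ↔ t ⊆ projR s := by
  simp [Finset.image_subset_iff, Finset.subset_iff]
lemma imageH_subset {t : Finset F} {s : Finset (LF F)} :
    t.image LF.human ⊆ s ↔ t ⊆ projH s := by
  simp [Finset.image_subset_iff, Finset.subset_iff]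
lemma imageR_inter {t : Finset F} {s : Finset (LF F)} :
    t.image LF.robot ∩ s = ∅ ↔ t ∩ projR s = ∅ := by
  simp only [Finset.eq_empty_iff_forall_notMem, Finset.mem_inter, Finset.mem_image, not_and]
  constructor
  · intro h f hf hfs; exact h (LF.robot f) ⟨f, hf, rfl⟩ (mem_projR.mp hfs)
  · rintro h x ⟨f, hf, rfl⟩ hxs; exact h f hf (mem_projR.mpr hxs)
lemma imageH_inter {t : Finset F} {s : Finset (LF F)} :
    t.image LF.human ∩ s = ∅ ↔ t ∩ projH s = ∅ := by
  simp only [Finset.eq_empty_iff_forall_notMem, Finset.mem_inter, Finset.mem_image, not_and]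
  constructor
  · intro h f hf hfs; exact h (LF.human f) ⟨f, hf, rfl⟩ (mem_projH.mp hfs)
  · rintro h x ⟨f, hf, rfl⟩ hxs; exact h f hf (mem_projH.mpr hxs)

-- step lemmas for liftH
lemma projH_step_liftH (s : Finset (LF F)) (a : Act F) :
    projH (stepAct s (liftH a)) = stepAct (projH s) a := by
  ext f; simp [stepAct, liftH]
lemma projR_step_liftH (s : Finset (LF F)) (a : Act F) :
    projR (stepAct s (liftH a)) = projR s := by
  ext f; simp [stepAct, liftH]
lemma projK_step_liftH (s : Finset (LF F)) (a : Act F) :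
    projK (stepAct s (liftH a)) = projK s := by
  ext f; simp [stepAct, liftH]
lemma rflag_step_liftH (s : Finset (LF F)) (a : Act F) :
    LF.robotCanAct ∈ stepAct s (liftH a) ↔ LF.robotCanAct ∈ s := by
  simp [stepAct, liftH]
lemma hflag_step_liftH (s : Finset (LF F)) (a : Act F) :
    LF.humanCanAct ∈ stepAct s (liftH a) ↔ LF.humanCanAct ∈ s := by
  simp [stepAct, liftH]
lemma exec_liftH {s : Finset (LF F)} {a : Act F} :
    execAct s (liftH a) ↔ execAct (projH s) a ∧ LF.humanCanAct ∈ s := by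
  simp only [execAct, liftH, Finset.union_subset_iff, Finset.singleton_subset_iff,
    imageH_subset, imageH_inter]
  tauto

-- step lemmas for liftR
lemma projR_step_liftR (s : Finset (LF F)) (a : Act F) :
    projR (stepAct s (liftR a)) = stepAct (projR s) a := by
  ext f; simp [stepAct, liftR]
lemma projH_step_liftR (s : Finset (LF F)) (a : Act F) :
    projH (stepAct s (liftR a)) = projH s := by
  ext f; simp [stepAct, liftR]
lemma projK_step_liftR (s : Finset (LF F)) (a : Act F) :
    projK (stepAct s (liftR a)) = projK s := by
  ext f; simp [stepAct, liftR]
lemma rflag_step_liftR (s : Finset (LF F)) (a : Act F) :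
    LF.robotCanAct ∈ stepAct s (liftR a) ↔ LF.robotCanAct ∈ s := by
  simp [stepAct, liftR]
lemma hflag_step_liftR (s : Finset (LF F)) (a : Act F) :
    LF.humanCanAct ∈ stepAct s (liftR a) ↔ LF.humanCanAct ∈ s := by
  simp [stepAct, liftR]
lemma exec_liftR {s : Finset (LF F)} {a : Act F} :
    execAct s (liftR a) ↔ execAct (projR s) a ∧ LF.robotCanAct ∈ s := by
  simp only [execAct, liftR, Finset.union_subset_iff, Finset.singleton_subset_iff,
    imageR_subset, imageR_inter]
  tauto

-- flips
lemma projR_step_flipH (s : Finset (LF F)) (MH : PModel F) :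
    projR (stepAct s (flipH MH)) = projR s := by
  ext f; simp [stepAct, flipH]
lemma projH_step_flipH (s : Finset (LF F)) (MH : PModel F) :
    projH (stepAct s (flipH MH)) = projH s := by
  ext f; simp [stepAct, flipH]
lemma projK_step_flipH (s : Finset (LF F)) (MH : PModel F) :
    projK (stepAct s (flipH MH)) = projK s := by
  ext f; simp [stepAct, flipH]
lemma rflag_step_flipH (s : Finset (LF F)) (MH : PModel F) :
    LF.robotCanAct ∈ stepAct s (flipH MH) := by
  simp [stepAct, flipH]
lemma hflag_step_flipH (s : Finset (LF F)) (MH : PModel F) :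
    LF.humanCanAct ∉ stepAct s (flipH MH) := by
  simp [stepAct, flipH]
lemma exec_flipH {s : Finset (LF F)} {MH : PModel F} :
    execAct s (flipH MH) ↔ MH.goal ⊆ projH s ∧ LF.humanCanAct ∈ s := by
  simp only [execAct, flipH, Finset.union_subset_iff, Finset.singleton_subset_iff,
    imageH_subset, Finset.empty_inter, and_true, true_and]

lemma projR_step_flipR (s : Finset (LF F)) (MR : PModel F) :
    projR (stepAct s (flipR MR)) = projR s := by
  ext f; simp [stepAct, flipR]
lemma projH_step_flipR (s : Finset (LF F)) (MR : PModel F) :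
    projH (stepAct s (flipR MR)) = projH s := by
  ext f; simp [stepAct, flipR]
lemma projK_step_flipR (s : Finset (LF F)) (MR : PModel F) :
    projK (stepAct s (flipR MR)) = projK s := by
  ext f; simp [stepAct, flipR]
lemma rflag_step_flipR (s : Finset (LF F)) (MR : PModel F) :
    LF.robotCanAct ∉ stepAct s (flipR MR) := by
  simp [stepAct, flipR]
lemma hflag_step_flipR (s : Finset (LF F)) (MR : PModel F) :
    LF.humanCanAct ∈ stepAct s (flipR MR) ↔ LF.humanCanAct ∈ s := by
  simp [stepAct, flipR]
lemma exec_flipR {s : Finset (LF F)} {MR : PModel F} :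
    execAct s (flipR MR) ↔ MR.goal ⊆ projR s ∧ LF.robotCanAct ∈ s := by
  simp only [execAct, flipR, Finset.union_subset_iff, Finset.singleton_subset_iff,
    imageR_subset, Finset.empty_inter, and_true, true_and]


variable {F : Type} [DecidableEq F] [Fintype F]

-- check actions: step lemmas (uniform over the four checks)
lemma projR_step_chk1 (s : Finset (LF F)) (f : F) : projR (stepAct s (chk1 f)) = projR s := by
  ext g; simp [stepAct, chk1]
lemma projH_step_chk1 (s : Finset (LF F)) (f : F) : projH (stepAct s (chk1 f)) = projH s := by
  ext g; simp [stepAct, chk1]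
lemma projK_step_chk1 (s : Finset (LF F)) (f : F) :
    projK (stepAct s (chk1 f)) = insert f (projK s) := by
  ext g; simp [stepAct, chk1]
lemma rflag_step_chk1 (s : Finset (LF F)) (f : F) :
    LF.robotCanAct ∈ stepAct s (chk1 f) ↔ LF.robotCanAct ∈ s := by simp [stepAct, chk1]
lemma hflag_step_chk1 (s : Finset (LF F)) (f : F) :
    LF.humanCanAct ∈ stepAct s (chk1 f) ↔ LF.humanCanAct ∈ s := by simp [stepAct, chk1]

lemma projR_step_chk2 (s : Finset (LF F)) (f : F) : projR (stepAct s (chk2 f)) = projR s := by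
  ext g; simp [stepAct, chk2]
lemma projH_step_chk2 (s : Finset (LF F)) (f : F) : projH (stepAct s (chk2 f)) = projH s := by
  ext g; simp [stepAct, chk2]
lemma projK_step_chk2 (s : Finset (LF F)) (f : F) :
    projK (stepAct s (chk2 f)) = insert f (projK s) := by
  ext g; simp [stepAct, chk2]
lemma rflag_step_chk2 (s : Finset (LF F)) (f : F) :
    LF.robotCanAct ∈ stepAct s (chk2 f) ↔ LF.robotCanAct ∈ s := by simp [stepAct, chk2]
lemma hflag_step_chk2 (s : Finset (LF F)) (f : F) :
    LF.humanCanAct ∈ stepAct s (chk2 f) ↔ LF.humanCanAct ∈ s := by simp [stepAct, chk2]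

lemma projR_step_chk3 (s : Finset (LF F)) (f : F) : projR (stepAct s (chk3 f)) = projR s := by
  ext g; simp [stepAct, chk3]
lemma projH_step_chk3 (s : Finset (LF F)) (f : F) : projH (stepAct s (chk3 f)) = projH s := by
  ext g; simp [stepAct, chk3]
lemma projK_step_chk3 (s : Finset (LF F)) (f : F) :
    projK (stepAct s (chk3 f)) = insert f (projK s) := by
  ext g; simp [stepAct, chk3]
lemma rflag_step_chk3 (s : Finset (LF F)) (f : F) :
    LF.robotCanAct ∈ stepAct s (chk3 f) ↔ LF.robotCanAct ∈ s := by simp [stepAct, chk3]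
lemma hflag_step_chk3 (s : Finset (LF F)) (f : F) :
    LF.humanCanAct ∈ stepAct s (chk3 f) ↔ LF.humanCanAct ∈ s := by simp [stepAct, chk3]

lemma projR_step_chk4 (s : Finset (LF F)) (f : F) : projR (stepAct s (chk4 f)) = projR s := by
  ext g; simp [stepAct, chk4]
lemma projH_step_chk4 (s : Finset (LF F)) (f : F) : projH (stepAct s (chk4 f)) = projH s := by
  ext g; simp [stepAct, chk4]
lemma projK_step_chk4 (s : Finset (LF F)) (f : F) :
    projK (stepAct s (chk4 f)) = insert f (projK s) := by
  ext g; simp [stepAct, chk4]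
lemma rflag_step_chk4 (s : Finset (LF F)) (f : F) :
    LF.robotCanAct ∈ stepAct s (chk4 f) ↔ LF.robotCanAct ∈ s := by simp [stepAct, chk4]
lemma hflag_step_chk4 (s : Finset (LF F)) (f : F) :
    LF.humanCanAct ∈ stepAct s (chk4 f) ↔ LF.humanCanAct ∈ s := by simp [stepAct, chk4]

-- executability of checks
lemma exec_chk1 {s : Finset (LF F)} {f : F} :
    execAct s (chk1 f) ↔ LF.robot f ∈ s ∧ LF.human f ∉ s ∧ LF.robotCanAct ∉ s ∧
      LF.humanCanAct ∉ s ∧ LF.compare f ∉ s := by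
  simp only [execAct, chk1, Finset.singleton_subset_iff,
    Finset.eq_empty_iff_forall_notMem, Finset.mem_inter, Finset.mem_insert,
    Finset.mem_singleton, not_and]
  constructor
  · rintro ⟨h1, h2⟩
    exact ⟨h1, fun h => h2 _ (by tauto) h, fun h => h2 _ (by tauto) h,
      fun h => h2 _ (by tauto) h, fun h => h2 _ (by tauto) h⟩
  · rintro ⟨h1, h2, h3, h4, h5⟩
    refine ⟨h1, ?_⟩
    rintro x (rfl | rfl | rfl | rfl) hx <;> tauto
lemma exec_chk2 {s : Finset (LF F)} {f : F} :
    execAct s (chk2 f) ↔ LF.human f ∈ s ∧ LF.robot f ∉ s ∧ LF.robotCanAct ∉ s ∧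
      LF.humanCanAct ∉ s ∧ LF.compare f ∉ s := by
  simp only [execAct, chk2, Finset.singleton_subset_iff,
    Finset.eq_empty_iff_forall_notMem, Finset.mem_inter, Finset.mem_insert,
    Finset.mem_singleton, not_and]
  constructor
  · rintro ⟨h1, h2⟩
    exact ⟨h1, fun h => h2 _ (by tauto) h, fun h => h2 _ (by tauto) h,
      fun h => h2 _ (by tauto) h, fun h => h2 _ (by tauto) h⟩
  · rintro ⟨h1, h2, h3, h4, h5⟩
    refine ⟨h1, ?_⟩
    rintro x (rfl | rfl | rfl | rfl) hx <;> tauto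
lemma exec_chk3 {s : Finset (LF F)} {f : F} :
    execAct s (chk3 f) ↔ LF.robot f ∈ s ∧ LF.human f ∈ s ∧ LF.robotCanAct ∉ s ∧
      LF.humanCanAct ∉ s ∧ LF.compare f ∉ s := by
  simp only [execAct, chk3, Finset.insert_subset_iff, Finset.singleton_subset_iff,
    Finset.eq_empty_iff_forall_notMem, Finset.mem_inter, Finset.mem_insert,
    Finset.mem_singleton, not_and]
  constructor
  · rintro ⟨⟨h1, h1'⟩, h2⟩
    exact ⟨h1, h1', fun h => h2 _ (by tauto) h, fun h => h2 _ (by tauto) h,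
      fun h => h2 _ (by tauto) h⟩
  · rintro ⟨h1, h1', h3, h4, h5⟩
    refine ⟨⟨h1, h1'⟩, ?_⟩
    rintro x (rfl | rfl | rfl) hx <;> tauto
lemma exec_chk4 {s : Finset (LF F)} {f : F} :
    execAct s (chk4 f) ↔ LF.robot f ∉ s ∧ LF.human f ∉ s ∧ LF.robotCanAct ∉ s ∧
      LF.humanCanAct ∉ s ∧ LF.compare f ∉ s := by
  simp only [execAct, chk4, Finset.empty_subset, true_and,
    Finset.eq_empty_iff_forall_notMem, Finset.mem_inter, Finset.mem_insert,
    Finset.mem_singleton, not_and]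
  constructor
  · rintro h2
    exact ⟨fun h => h2 _ (by tauto) h, fun h => h2 _ (by tauto) h,
      fun h => h2 _ (by tauto) h, fun h => h2 _ (by tauto) h, fun h => h2 _ (by tauto) h⟩
  · rintro ⟨h1, h2, h3, h4, h5⟩
    rintro x (rfl | rfl | rfl | rfl | rfl) hx <;> tauto

-- distinctness (for counting disagreement checks)
lemma ne_chk12_of_flag {a : Act (LF F)} (h : LF.humanCanAct ∉ a.preNeg) (f : F) :
    a ≠ chk1 f ∧ a ≠ chk2 f := by
  constructor <;> rintro rfl <;> simp [chk1, chk2] at h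
lemma chk3_ne_chk1 (f g : F) : chk3 f ≠ (chk1 g : Act (LF F)) := by
  intro h
  have h2 : ({LF.robot f, LF.human f} : Finset (LF F)) = {LF.robot g} :=
    congrArg Act.prePos h
  have h3 : LF.human f ∈ ({LF.robot g} : Finset (LF F)) := h2 ▸ by simp
  simp at h3
lemma chk3_ne_chk2 (f g : F) : chk3 f ≠ (chk2 g : Act (LF F)) := by
  intro h
  have h2 : ({LF.robot f, LF.human f} : Finset (LF F)) = {LF.human g} :=
    congrArg Act.prePos h
  have h3 : LF.robot f ∈ ({LF.human g} : Finset (LF F)) := h2 ▸ by simp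
  simp at h3
lemma chk4_ne_chk1 (f g : F) : chk4 f ≠ (chk1 g : Act (LF F)) := by
  intro h
  have h2 : (∅ : Finset (LF F)) = {LF.robot g} := congrArg Act.prePos h
  have h3 : LF.robot g ∈ (∅ : Finset (LF F)) := h2 ▸ by simp
  simp at h3
lemma chk4_ne_chk2 (f g : F) : chk4 f ≠ (chk2 g : Act (LF F)) := by
  intro h
  have h2 : (∅ : Finset (LF F)) = {LF.human g} := congrArg Act.prePos h
  have h3 : LF.human g ∈ (∅ : Finset (LF F)) := h2 ▸ by simp
  simp at h3

-- the disagreement predicate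
def disP (MR : PModel F) (a : Act (LF F)) : Bool :=
  decide (∃ f ∈ MR.fluents, a = chk1 f ∨ a = chk2 f)

lemma disP_liftH (MR : PModel F) (a : Act F) : disP MR (liftH a) = false := by
  simp only [disP, decide_eq_false_iff_not, not_exists]
  intro f hf
  have := ne_chk12_of_flag (a := liftH a) (by simp [liftH]) f
  tauto
lemma disP_liftR (MR : PModel F) (a : Act F) : disP MR (liftR a) = false := by
  simp only [disP, decide_eq_false_iff_not, not_exists]
  intro f hf
  have := ne_chk12_of_flag (a := liftR a) (by simp [liftR]) f
  tauto
lemma disP_flipH (MR MH : PModel F) : disP MR (flipH MH) = false := by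
  simp only [disP, decide_eq_false_iff_not, not_exists]
  intro f hf
  have := ne_chk12_of_flag (a := flipH MH) (by simp [flipH]) f
  tauto
lemma disP_flipR (MR MR' : PModel F) : disP MR (flipR MR') = false := by
  simp only [disP, decide_eq_false_iff_not, not_exists]
  intro f hf
  have := ne_chk12_of_flag (a := flipR MR') (by simp [flipR]) f
  tauto
lemma disP_chk3 (MR : PModel F) (f : F) : disP MR (chk3 f) = false := by
  simp only [disP, decide_eq_false_iff_not, not_exists]
  intro g hg
  have := chk3_ne_chk1 (F := F) f g
  have := chk3_ne_chk2 (F := F) f g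
  tauto
lemma disP_chk4 (MR : PModel F) (f : F) : disP MR (chk4 f) = false := by
  simp only [disP, decide_eq_false_iff_not, not_exists]
  intro g hg
  have := chk4_ne_chk1 (F := F) f g
  have := chk4_ne_chk2 (F := F) f g
  tauto
lemma disP_chk1 (MR : PModel F) {f : F} (hf : f ∈ MR.fluents) : disP MR (chk1 f) = true := by
  simp only [disP, decide_eq_true_eq]
  exact ⟨f, hf, Or.inl rfl⟩
lemma disP_chk2 (MR : PModel F) {f : F} (hf : f ∈ MR.fluents) : disP MR (chk2 f) = true := by
  simp only [disP, decide_eq_true_eq]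
  exact ⟨f, hf, Or.inr rfl⟩

lemma disCount_eq_countP (MR : PModel F) (π : List (Act (LF F))) :
    disCount MR π = π.countP (disP MR) := rfl


variable {F : Type} [DecidableEq F] [Fintype F]

omit [Fintype F] in
@[simp] lemma runSeq_cons (s : Finset F) (a : Act F) (l : List (Act F)) :
    runSeq s (a :: l) = runSeq (stepAct s a) l := rfl

omit [Fintype F] in
lemma runSeq_append (s : Finset F) (l1 l2 : List (Act F)) :
    runSeq s (l1 ++ l2) = runSeq (runSeq s l1) l2 := by
  induction l1 generalizing s with
  | nil => rfl
  | cons a l ih => simp [runSeq, ih]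

omit [Fintype F] in
lemma execFrom_append {M : PModel F} {s : Finset F} {l1 l2 : List (Act F)} :
    ExecFrom M s (l1 ++ l2) ↔ ExecFrom M s l1 ∧ ExecFrom M (runSeq s l1) l2 := by
  induction l1 generalizing s with
  | nil => simp [ExecFrom, runSeq]
  | cons a l ih => simp [ExecFrom, runSeq, ih]; tauto

lemma runSeq_subset {M : PModel F} (hwf : WellFormed M) :
    ∀ (π : List (Act F)) (s : Finset F), s ⊆ M.fluents → ExecFrom M s π →
      runSeq s π ⊆ M.fluents := by
  intro π
  induction π with
  | nil => intro s hs _; exact hs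
  | cons a l ih =>
    rintro s hs ⟨ha, hex, hrest⟩
    refine ih _ ?_ hrest
    intro x hx
    rcases Finset.mem_sdiff.mp hx with ⟨hx1, _⟩
    rcases Finset.mem_union.mp hx1 with h | h
    · exact hs h
    · exact (hwf.2.2 a ha).2.2.1 h

omit [Fintype F] in
lemma planCost_append (M : PModel F) (l1 l2 : List (Act F)) :
    planCost M (l1 ++ l2) = planCost M l1 + planCost M l2 := by
  simp [planCost]

lemma exists_short_plan {M : PModel F} (hwf : WellFormed M) :
    ∀ (n : ℕ) (π : List (Act F)), π.length ≤ n → IsPlan M π →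
    ∃ π', IsPlan M π' ∧ runSeq M.init π' = runSeq M.init π ∧
      π'.length < 2 ^ M.fluents.card := by
  intro n
  induction n with
  | zero =>
    intro π hlen hπ
    refine ⟨π, hπ, rfl, ?_⟩
    have : π.length = 0 := Nat.le_zero.mp hlen
    rw [this]; positivity
  | succ n ih =>
    intro π hlen hπ
    by_cases hshort : π.length < 2 ^ M.fluents.card
    · exact ⟨π, hπ, rfl, hshort⟩
    · -- pigeonhole: two equal visited states
      push_neg at hshort
      set L := π.length with hL
      have hcard : (M.fluents.powerset).card < (Finset.univ : Finset (Fin (L + 1))).card := by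
        simp [Finset.card_powerset]
        omega
      have hmaps : ∀ k : Fin (L + 1), k ∈ (Finset.univ : Finset (Fin (L+1))) →
          runSeq M.init (π.take k) ∈ M.fluents.powerset := by
        intro k _
        rw [Finset.mem_powerset]
        have hexec : ExecFrom M M.init (π.take k) := by
          have := hπ.1
          conv at this => rw [← List.take_append_drop k π]
          exact (execFrom_append.mp this).1
        exact runSeq_subset hwf _ _ hwf.1 hexec
      obtain ⟨i, -, j, -, hij, heq⟩ :=
        Finset.exists_ne_map_eq_of_card_lt_of_maps_to hcard hmaps
      -- wlog i < j
      rcases lt_or_gt_of_ne (by exact_mod_cast fun h => hij (Fin.ext h) :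
          (i : ℕ) ≠ (j : ℕ)) with hlt | hlt
      all_goals {
        first
        | (have key : ∃ (p q : ℕ), p < q ∧ q ≤ L ∧
              runSeq M.init (π.take p) = runSeq M.init (π.take q) :=
            ⟨i, j, hlt, Nat.lt_succ_iff.mp j.isLt, heq⟩)
        | (have key : ∃ (p q : ℕ), p < q ∧ q ≤ L ∧
              runSeq M.init (π.take p) = runSeq M.init (π.take q) :=
            ⟨j, i, hlt, Nat.lt_succ_iff.mp i.isLt, heq.symm⟩)
        obtain ⟨p, q, hpq, hqL, hpqeq⟩ := key
        set π' := π.take p ++ π.drop q with hπ'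
        have hsplit : π = π.take q ++ π.drop q := (List.take_append_drop q π).symm
        have hexecq : ExecFrom M M.init (π.take q) ∧
            ExecFrom M (runSeq M.init (π.take q)) (π.drop q) := by
          have := hπ.1
          conv at this => rw [hsplit]
          exact execFrom_append.mp this
        have hexecp : ExecFrom M M.init (π.take p) := by
          have h2 : π.take p = (π.take q).take p := by
            rw [List.take_take, min_eq_left hpq.le]
          rw [h2]
          have := hexecq.1
          conv at this => rw [← List.take_append_drop p (π.take q)]
          exact (execFrom_append.mp this).1
        have hexec' : ExecFrom M M.init π' := by
          rw [hπ', execFrom_append]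
          refine ⟨hexecp, ?_⟩
          rw [hpqeq]
          exact hexecq.2
        have hrun' : runSeq M.init π' = runSeq M.init π := by
          rw [hπ', runSeq_append, hpqeq, ← runSeq_append, ← hsplit]
        have hlen' : π'.length ≤ n := by
          have h1 : π'.length = min p L + (L - q) := by
            simp [hπ', hL]
          have := hlen
          omega
        obtain ⟨π'', h1, h2, h3⟩ := ih π' hlen' ⟨hexec', by rw [hrun']; exact hπ.2⟩
        exact ⟨π'', h1, by rw [h2, hrun'], h3⟩
      }


variable {F : Type} [DecidableEq F] [Fintype F]

lemma mem_compiled_cases {MR MH : PModel F} {c : Act (LF F) → ℕ} {a : Act (LF F)}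
    (ha : a ∈ (compiled MR MH c).actions) :
    (∃ b ∈ MR.actions, a = liftR b) ∨ (∃ b ∈ MH.actions, a = liftH b) ∨
    a = flipH MH ∨ a = flipR MR ∨
    (∃ f ∈ MR.fluents, a = chk1 f) ∨ (∃ f ∈ MR.fluents, a = chk2 f) ∨
    (∃ f ∈ MR.fluents, a = chk3 f) ∨ (∃ f ∈ MR.fluents, a = chk4 f) := by
  simp only [compiled, Finset.mem_union, Finset.mem_image, Finset.mem_insert,
    Finset.mem_singleton] at ha
  aesop

lemma card_insert_inter {A D : Finset F} {f : F} (hf : f ∉ A) :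
    ((insert f A) ∩ D).card = (if f ∈ D then 1 else 0) + (A ∩ D).card := by
  by_cases hD : f ∈ D
  · rw [Finset.insert_inter_of_mem hD,
      Finset.card_insert_of_notMem (by simp [hf])]
    simp [hD, Nat.add_comm]
  · rw [Finset.insert_inter_of_notMem hD]; simp [hD]

/-- Phase 3: both flags off; only checks can run. -/
lemma extractK {MR MH : PModel F} {c : Act (LF F) → ℕ} :
    ∀ (π : List (Act (LF F))) (s : Finset (LF F)),
    ExecFrom (compiled MR MH c) s π →
    LF.robotCanAct ∉ s → LF.humanCanAct ∉ s →
    projR (runSeq s π) = projR s ∧ projH (runSeq s π) = projH s ∧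
    projK s ⊆ projK (runSeq s π) ∧
    π.countP (disP MR) = ((projK (runSeq s π) \ projK s) ∩
      ((projR s \ projH s) ∪ (projH s \ projR s))).card := by
  intro π
  induction π with
  | nil =>
    intro s _ _ _
    exact ⟨by simp [runSeq], by simp [runSeq], by simp [runSeq], by simp [runSeq]⟩
  | cons a l ih =>
    rintro s ⟨ha, hexec, hrest⟩ hrf hhf
    rcases mem_compiled_cases ha with ⟨b, hb, rfl⟩ | ⟨b, hb, rfl⟩ | rfl | rfl |
      ⟨f, hf, rfl⟩ | ⟨f, hf, rfl⟩ | ⟨f, hf, rfl⟩ | ⟨f, hf, rfl⟩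
    · exact absurd (exec_liftR.mp hexec).2 hrf
    · exact absurd (exec_liftH.mp hexec).2 hhf
    · exact absurd (exec_flipH.mp hexec).2 hhf
    · exact absurd (exec_flipR.mp hexec).2 hrf
    · -- chk1
      obtain ⟨hR, hH, -, -, hK⟩ := exec_chk1.mp hexec
      obtain ⟨ih1, ih2, ih3, ih4⟩ := ih (stepAct s (chk1 f)) hrest
        (by rw [rflag_step_chk1]; exact hrf) (by rw [hflag_step_chk1]; exact hhf)
      rw [projR_step_chk1] at ih1
      rw [projH_step_chk1] at ih2
      rw [projK_step_chk1] at ih3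
      have hfK' : f ∈ projK (runSeq (stepAct s (chk1 f)) l) := ih3 (Finset.mem_insert_self _ _)
      have hfKs : f ∉ projK s := by simpa using hK
      refine ⟨ih1, ih2, ?_, ?_⟩
      · exact fun x hx => ih3 (Finset.mem_insert_of_mem hx)
      · show (chk1 f :: l).countP (disP MR) =
            ((projK (runSeq (stepAct s (chk1 f)) l) \ projK s) ∩
              ((projR s \ projH s) ∪ (projH s \ projR s))).card
        rw [List.countP_cons, ih4, projR_step_chk1, projH_step_chk1, projK_step_chk1]
        have hsplit : projK (runSeq (stepAct s (chk1 f)) l) \ projK s =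
            insert f (projK (runSeq (stepAct s (chk1 f)) l) \ insert f (projK s)) := by
          ext x
          simp only [Finset.mem_sdiff, Finset.mem_insert]
          constructor
          · rintro ⟨h1, h2⟩
            by_cases hx : x = f
            · exact Or.inl hx
            · exact Or.inr ⟨h1, by tauto⟩
          · rintro (rfl | ⟨h1, h2⟩)
            · exact ⟨hfK', hfKs⟩
            · exact ⟨h1, fun h => h2 (Or.inr h)⟩
        rw [hsplit, card_insert_inter (by simp)]
        have hfD : f ∈ (projR s \ projH s) ∪ (projH s \ projR s) := by
          simp only [Finset.mem_union, Finset.mem_sdiff, mem_projR, mem_projH]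
          tauto
        rw [if_pos hfD, disP_chk1 MR hf]
        simp [Nat.add_comm]
    · -- chk2
      obtain ⟨hH, hR, -, -, hK⟩ := exec_chk2.mp hexec
      obtain ⟨ih1, ih2, ih3, ih4⟩ := ih (stepAct s (chk2 f)) hrest
        (by rw [rflag_step_chk2]; exact hrf) (by rw [hflag_step_chk2]; exact hhf)
      rw [projR_step_chk2] at ih1
      rw [projH_step_chk2] at ih2
      rw [projK_step_chk2] at ih3
      have hfK' : f ∈ projK (runSeq (stepAct s (chk2 f)) l) := ih3 (Finset.mem_insert_self _ _)
      have hfKs : f ∉ projK s := by simpa using hK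
      refine ⟨ih1, ih2, ?_, ?_⟩
      · exact fun x hx => ih3 (Finset.mem_insert_of_mem hx)
      · show (chk2 f :: l).countP (disP MR) =
            ((projK (runSeq (stepAct s (chk2 f)) l) \ projK s) ∩
              ((projR s \ projH s) ∪ (projH s \ projR s))).card
        rw [List.countP_cons, ih4, projR_step_chk2, projH_step_chk2, projK_step_chk2]
        have hsplit : projK (runSeq (stepAct s (chk2 f)) l) \ projK s =
            insert f (projK (runSeq (stepAct s (chk2 f)) l) \ insert f (projK s)) := by
          ext x
          simp only [Finset.mem_sdiff, Finset.mem_insert]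
          constructor
          · rintro ⟨h1, h2⟩
            by_cases hx : x = f
            · exact Or.inl hx
            · exact Or.inr ⟨h1, by tauto⟩
          · rintro (rfl | ⟨h1, h2⟩)
            · exact ⟨hfK', hfKs⟩
            · exact ⟨h1, fun h => h2 (Or.inr h)⟩
        rw [hsplit, card_insert_inter (by simp)]
        have hfD : f ∈ (projR s \ projH s) ∪ (projH s \ projR s) := by
          simp only [Finset.mem_union, Finset.mem_sdiff, mem_projR, mem_projH]
          tauto
        rw [if_pos hfD, disP_chk2 MR hf]
        simp [Nat.add_comm]
    · -- chk3
      obtain ⟨hR, hH, -, -, hK⟩ := exec_chk3.mp hexec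
      obtain ⟨ih1, ih2, ih3, ih4⟩ := ih (stepAct s (chk3 f)) hrest
        (by rw [rflag_step_chk3]; exact hrf) (by rw [hflag_step_chk3]; exact hhf)
      rw [projR_step_chk3] at ih1
      rw [projH_step_chk3] at ih2
      rw [projK_step_chk3] at ih3
      have hfK' : f ∈ projK (runSeq (stepAct s (chk3 f)) l) := ih3 (Finset.mem_insert_self _ _)
      have hfKs : f ∉ projK s := by simpa using hK
      refine ⟨ih1, ih2, ?_, ?_⟩
      · exact fun x hx => ih3 (Finset.mem_insert_of_mem hx)
      · show (chk3 f :: l).countP (disP MR) =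
            ((projK (runSeq (stepAct s (chk3 f)) l) \ projK s) ∩
              ((projR s \ projH s) ∪ (projH s \ projR s))).card
        rw [List.countP_cons, ih4, projR_step_chk3, projH_step_chk3, projK_step_chk3]
        have hsplit : projK (runSeq (stepAct s (chk3 f)) l) \ projK s =
            insert f (projK (runSeq (stepAct s (chk3 f)) l) \ insert f (projK s)) := by
          ext x
          simp only [Finset.mem_sdiff, Finset.mem_insert]
          constructor
          · rintro ⟨h1, h2⟩
            by_cases hx : x = f
            · exact Or.inl hx
            · exact Or.inr ⟨h1, by tauto⟩
          · rintro (rfl | ⟨h1, h2⟩)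
            · exact ⟨hfK', hfKs⟩
            · exact ⟨h1, fun h => h2 (Or.inr h)⟩
        rw [hsplit, card_insert_inter (by simp)]
        have hfD : f ∉ (projR s \ projH s) ∪ (projH s \ projR s) := by
          simp only [Finset.mem_union, Finset.mem_sdiff, mem_projR, mem_projH]
          tauto
        rw [if_neg hfD, disP_chk3 MR]
        simp
    · -- chk4
      obtain ⟨hR, hH, -, -, hK⟩ := exec_chk4.mp hexec
      obtain ⟨ih1, ih2, ih3, ih4⟩ := ih (stepAct s (chk4 f)) hrest
        (by rw [rflag_step_chk4]; exact hrf) (by rw [hflag_step_chk4]; exact hhf)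
      rw [projR_step_chk4] at ih1
      rw [projH_step_chk4] at ih2
      rw [projK_step_chk4] at ih3
      have hfK' : f ∈ projK (runSeq (stepAct s (chk4 f)) l) := ih3 (Finset.mem_insert_self _ _)
      have hfKs : f ∉ projK s := by simpa using hK
      refine ⟨ih1, ih2, ?_, ?_⟩
      · exact fun x hx => ih3 (Finset.mem_insert_of_mem hx)
      · show (chk4 f :: l).countP (disP MR) =
            ((projK (runSeq (stepAct s (chk4 f)) l) \ projK s) ∩
              ((projR s \ projH s) ∪ (projH s \ projR s))).card
        rw [List.countP_cons, ih4, projR_step_chk4, projH_step_chk4, projK_step_chk4]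
        have hsplit : projK (runSeq (stepAct s (chk4 f)) l) \ projK s =
            insert f (projK (runSeq (stepAct s (chk4 f)) l) \ insert f (projK s)) := by
          ext x
          simp only [Finset.mem_sdiff, Finset.mem_insert]
          constructor
          · rintro ⟨h1, h2⟩
            by_cases hx : x = f
            · exact Or.inl hx
            · exact Or.inr ⟨h1, by tauto⟩
          · rintro (rfl | ⟨h1, h2⟩)
            · exact ⟨hfK', hfKs⟩
            · exact ⟨h1, fun h => h2 (Or.inr h)⟩
        rw [hsplit, card_insert_inter (by simp)]
        have hfD : f ∉ (projR s \ projH s) ∪ (projH s \ projR s) := by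
          simp only [Finset.mem_union, Finset.mem_sdiff, mem_projR, mem_projH]
          tauto
        rw [if_neg hfD, disP_chk4 MR]
        simp


variable {F : Type} [DecidableEq F] [Fintype F]

/-- Phase 2: robot flag on, human flag off, no compare fluent yet. -/
lemma extractR {MR MH : PModel F} {c : Act (LF F) → ℕ} {f0 : F} :
    ∀ (π : List (Act (LF F))) (s : Finset (LF F)),
    ExecFrom (compiled MR MH c) s π →
    LF.robotCanAct ∈ s → LF.humanCanAct ∉ s → projK s = ∅ →
    LF.compare f0 ∈ runSeq s π →
    ∃ πR, ExecFrom MR (projR s) πR ∧ MR.goal ⊆ runSeq (projR s) πR ∧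
      projR (runSeq s π) = runSeq (projR s) πR ∧
      projH (runSeq s π) = projH s ∧
      π.countP (disP MR) = (projK (runSeq s π) ∩
        ((runSeq (projR s) πR \ projH s) ∪ (projH s \ runSeq (projR s) πR))).card := by
  intro π
  induction π with
  | nil =>
    intro s _ hrf hhf hK hg
    exfalso
    have : f0 ∈ projK s := mem_projK.mpr hg
    rw [hK] at this
    simp at this
  | cons a l ih =>
    rintro s ⟨ha, hexec, hrest⟩ hrf hhf hK hg
    rcases mem_compiled_cases ha with ⟨b, hb, rfl⟩ | ⟨b, hb, rfl⟩ | rfl | rfl |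
      ⟨f, hf, rfl⟩ | ⟨f, hf, rfl⟩ | ⟨f, hf, rfl⟩ | ⟨f, hf, rfl⟩
    · -- liftR b
      obtain ⟨hexb, -⟩ := exec_liftR.mp hexec
      obtain ⟨πR, e1, e2, e3, e4, e5⟩ := ih (stepAct s (liftR b)) hrest
        (by rw [rflag_step_liftR]; exact hrf) (by rw [hflag_step_liftR]; exact hhf)
        (by rw [projK_step_liftR]; exact hK) hg
      rw [projR_step_liftR] at e1 e2 e3 e5
      rw [projH_step_liftR] at e4 e5
      refine ⟨b :: πR, ⟨hb, hexb, e1⟩, e2, ?_, ?_, ?_⟩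
      · simpa [runSeq_cons] using e3
      · simpa [runSeq_cons] using e4
      · rw [List.countP_cons, disP_liftR]
        simpa [runSeq_cons] using e5
    · exact absurd (exec_liftH.mp hexec).2 hhf
    · exact absurd (exec_flipH.mp hexec).2 hhf
    · -- flipR
      obtain ⟨hgoal, -⟩ := exec_flipR.mp hexec
      obtain ⟨k1, k2, k3, k4⟩ := extractK l (stepAct s (flipR MR)) hrest
        (rflag_step_flipR s MR) (by rw [hflag_step_flipR]; exact hhf)
      rw [projR_step_flipR] at k1 k4
      rw [projH_step_flipR] at k2 k4
      rw [projK_step_flipR, hK] at k4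
      refine ⟨[], trivial, hgoal, ?_, ?_, ?_⟩
      · simpa [runSeq_cons, runSeq] using k1
      · simpa [runSeq_cons, runSeq] using k2
      · rw [List.countP_cons, disP_flipR]
        simpa [runSeq_cons, runSeq] using k4
    · exact absurd hrf (exec_chk1.mp hexec).2.2.1
    · exact absurd hrf (exec_chk2.mp hexec).2.2.1
    · exact absurd hrf (exec_chk3.mp hexec).2.2.1
    · exact absurd hrf (exec_chk4.mp hexec).2.2.1

/-- Phase 1: human flag on, robot flag off, no compare fluent yet. -/
lemma extractH {MR MH : PModel F} {c : Act (LF F) → ℕ} {f0 : F} :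
    ∀ (π : List (Act (LF F))) (s : Finset (LF F)),
    ExecFrom (compiled MR MH c) s π →
    LF.humanCanAct ∈ s → LF.robotCanAct ∉ s → projK s = ∅ →
    LF.compare f0 ∈ runSeq s π →
    ∃ πH πR, ExecFrom MH (projH s) πH ∧ MH.goal ⊆ runSeq (projH s) πH ∧
      ExecFrom MR (projR s) πR ∧ MR.goal ⊆ runSeq (projR s) πR ∧
      projR (runSeq s π) = runSeq (projR s) πR ∧
      projH (runSeq s π) = runSeq (projH s) πH ∧
      π.countP (disP MR) = (projK (runSeq s π) ∩
        ((runSeq (projR s) πR \ runSeq (projH s) πH) ∪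
         (runSeq (projH s) πH \ runSeq (projR s) πR))).card := by
  intro π
  induction π with
  | nil =>
    intro s _ hhf hrf hK hg
    exfalso
    have : f0 ∈ projK s := mem_projK.mpr hg
    rw [hK] at this
    simp at this
  | cons a l ih =>
    rintro s ⟨ha, hexec, hrest⟩ hhf hrf hK hg
    rcases mem_compiled_cases ha with ⟨b, hb, rfl⟩ | ⟨b, hb, rfl⟩ | rfl | rfl |
      ⟨f, hf, rfl⟩ | ⟨f, hf, rfl⟩ | ⟨f, hf, rfl⟩ | ⟨f, hf, rfl⟩
    · exact absurd (exec_liftR.mp hexec).2 hrf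
    · -- liftH b
      obtain ⟨hexb, -⟩ := exec_liftH.mp hexec
      obtain ⟨πH, πR, e1, e2, e3, e4, e5, e6, e7⟩ := ih (stepAct s (liftH b)) hrest
        (by rw [hflag_step_liftH]; exact hhf) (by rw [rflag_step_liftH]; exact hrf)
        (by rw [projK_step_liftH]; exact hK) hg
      rw [projH_step_liftH] at e1 e2 e6 e7
      rw [projR_step_liftH] at e3 e4 e5 e7
      refine ⟨b :: πH, πR, ⟨hb, hexb, e1⟩, ?_, e3, e4, ?_, ?_, ?_⟩
      · simpa [runSeq_cons] using e2
      · simpa [runSeq_cons] using e5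
      · simpa [runSeq_cons] using e6
      · rw [List.countP_cons, disP_liftH]
        simpa [runSeq_cons] using e7
    · -- flipH
      obtain ⟨hgoal, -⟩ := exec_flipH.mp hexec
      obtain ⟨πR, e1, e2, e3, e4, e5⟩ := extractR l (stepAct s (flipH MH)) hrest
        (rflag_step_flipH s MH) (hflag_step_flipH s MH)
        (by rw [projK_step_flipH]; exact hK) hg
      rw [projR_step_flipH] at e1 e2 e3 e5
      rw [projH_step_flipH] at e4 e5
      refine ⟨[], πR, trivial, hgoal, e1, e2, ?_, ?_, ?_⟩
      · simpa [runSeq_cons, runSeq] using e3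
      · simpa [runSeq_cons, runSeq] using e4
      · rw [List.countP_cons, disP_flipH]
        simpa [runSeq_cons, runSeq] using e5
    · exact absurd (exec_flipR.mp hexec).2 hrf
    · exact absurd hhf (exec_chk1.mp hexec).2.2.2.1
    · exact absurd hhf (exec_chk2.mp hexec).2.2.2.1
    · exact absurd hhf (exec_chk3.mp hexec).2.2.2.1
    · exact absurd hhf (exec_chk4.mp hexec).2.2.2.1


variable {F : Type} [DecidableEq F] [Fintype F]

lemma mem_c_liftH {MR MH : PModel F} {c : Act (LF F) → ℕ} {b : Act F}
    (hb : b ∈ MH.actions) : liftH b ∈ (compiled MR MH c).actions := by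
  simp only [compiled]
  exact Finset.mem_union_left _ (Finset.mem_union_left _ (Finset.mem_union_left _
    (Finset.mem_union_left _ (Finset.mem_union_left _ (Finset.mem_union_right _
      (Finset.mem_image_of_mem _ hb))))))
lemma mem_c_liftR {MR MH : PModel F} {c : Act (LF F) → ℕ} {b : Act F}
    (hb : b ∈ MR.actions) : liftR b ∈ (compiled MR MH c).actions := by
  simp only [compiled]
  exact Finset.mem_union_left _ (Finset.mem_union_left _ (Finset.mem_union_left _
    (Finset.mem_union_left _ (Finset.mem_union_left _ (Finset.mem_union_left _
      (Finset.mem_image_of_mem _ hb))))))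
lemma mem_c_flipH {MR MH : PModel F} {c : Act (LF F) → ℕ} :
    flipH MH ∈ (compiled MR MH c).actions := by
  simp only [compiled]
  exact Finset.mem_union_left _ (Finset.mem_union_left _ (Finset.mem_union_left _
    (Finset.mem_union_left _ (Finset.mem_union_right _ (Finset.mem_insert_self _ _)))))
lemma mem_c_flipR {MR MH : PModel F} {c : Act (LF F) → ℕ} :
    flipR MR ∈ (compiled MR MH c).actions := by
  simp only [compiled]
  exact Finset.mem_union_left _ (Finset.mem_union_left _ (Finset.mem_union_left _
    (Finset.mem_union_left _ (Finset.mem_union_right _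
      (Finset.mem_insert_of_mem (Finset.mem_singleton_self _))))))
lemma mem_c_chk1 {MR MH : PModel F} {c : Act (LF F) → ℕ} {f : F}
    (hf : f ∈ MR.fluents) : chk1 f ∈ (compiled MR MH c).actions := by
  simp only [compiled]
  exact Finset.mem_union_left _ (Finset.mem_union_left _ (Finset.mem_union_left _
    (Finset.mem_union_right _ (Finset.mem_image_of_mem _ hf))))
lemma mem_c_chk2 {MR MH : PModel F} {c : Act (LF F) → ℕ} {f : F}
    (hf : f ∈ MR.fluents) : chk2 f ∈ (compiled MR MH c).actions := by
  simp only [compiled]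
  exact Finset.mem_union_left _ (Finset.mem_union_left _
    (Finset.mem_union_right _ (Finset.mem_image_of_mem _ hf)))
lemma mem_c_chk3 {MR MH : PModel F} {c : Act (LF F) → ℕ} {f : F}
    (hf : f ∈ MR.fluents) : chk3 f ∈ (compiled MR MH c).actions := by
  simp only [compiled]
  exact Finset.mem_union_left _
    (Finset.mem_union_right _ (Finset.mem_image_of_mem _ hf))
lemma mem_c_chk4 {MR MH : PModel F} {c : Act (LF F) → ℕ} {f : F}
    (hf : f ∈ MR.fluents) : chk4 f ∈ (compiled MR MH c).actions := by
  simp only [compiled]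
  exact Finset.mem_union_right _ (Finset.mem_image_of_mem _ hf)

omit [Fintype F] in
lemma execFrom_actions {M : PModel F} :
    ∀ (π : List (Act F)) (s : Finset F), ExecFrom M s π → ∀ a ∈ π, a ∈ M.actions := by
  intro π
  induction π with
  | nil => intro s _ a ha; simp at ha
  | cons b l ih =>
    rintro s ⟨hb, -, hrest⟩ a ha
    rcases List.mem_cons.mp ha with rfl | ha
    · exact hb
    · exact ih _ hrest a ha

/-- Simulate human plan in the compiled model. -/
lemma buildH {MR MH : PModel F} {c : Act (LF F) → ℕ} :
    ∀ (π2 : List (Act F)) (s : Finset (LF F)),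
    ExecFrom MH (projH s) π2 → LF.humanCanAct ∈ s →
    ExecFrom (compiled MR MH c) s (π2.map liftH) ∧
    projH (runSeq s (π2.map liftH)) = runSeq (projH s) π2 ∧
    projR (runSeq s (π2.map liftH)) = projR s ∧
    projK (runSeq s (π2.map liftH)) = projK s ∧
    (LF.robotCanAct ∈ runSeq s (π2.map liftH) ↔ LF.robotCanAct ∈ s) ∧
    LF.humanCanAct ∈ runSeq s (π2.map liftH) := by
  intro π2
  induction π2 with
  | nil => intro s _ h2; exact ⟨trivial, rfl, rfl, rfl, Iff.rfl, h2⟩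
  | cons b l ih =>
    rintro s ⟨hb, hexb, hrest⟩ hflag
    have hstep : projH (stepAct s (liftH b)) = stepAct (projH s) b := projH_step_liftH s b
    obtain ⟨i1, i2, i3, i4, i5, i6⟩ := ih (stepAct s (liftH b))
      (by rw [hstep]; exact hrest) (by rw [hflag_step_liftH]; exact hflag)
    refine ⟨⟨mem_c_liftH hb, exec_liftH.mpr ⟨hexb, hflag⟩, i1⟩, ?_, ?_, ?_, ?_, ?_⟩ <;>
      simp only [List.map_cons, runSeq_cons]
    · rw [i2, hstep]
    · rw [i3, projR_step_liftH]
    · rw [i4, projK_step_liftH]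
    · rw [i5, rflag_step_liftH]
    · exact i6

/-- Simulate robot plan in the compiled model. -/
lemma buildR {MR MH : PModel F} {c : Act (LF F) → ℕ} :
    ∀ (π1 : List (Act F)) (s : Finset (LF F)),
    ExecFrom MR (projR s) π1 → LF.robotCanAct ∈ s →
    ExecFrom (compiled MR MH c) s (π1.map liftR) ∧
    projR (runSeq s (π1.map liftR)) = runSeq (projR s) π1 ∧
    projH (runSeq s (π1.map liftR)) = projH s ∧
    projK (runSeq s (π1.map liftR)) = projK s ∧
    LF.robotCanAct ∈ runSeq s (π1.map liftR) ∧
    (LF.humanCanAct ∈ runSeq s (π1.map liftR) ↔ LF.humanCanAct ∈ s) := by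
  intro π1
  induction π1 with
  | nil => intro s _ h2; exact ⟨trivial, rfl, rfl, rfl, h2, Iff.rfl⟩
  | cons b l ih =>
    rintro s ⟨hb, hexb, hrest⟩ hflag
    have hstep : projR (stepAct s (liftR b)) = stepAct (projR s) b := projR_step_liftR s b
    obtain ⟨i1, i2, i3, i4, i5, i6⟩ := ih (stepAct s (liftR b))
      (by rw [hstep]; exact hrest) (by rw [rflag_step_liftR]; exact hflag)
    refine ⟨⟨mem_c_liftR hb, exec_liftR.mpr ⟨hexb, hflag⟩, i1⟩, ?_, ?_, ?_, ?_, ?_⟩ <;>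
      simp only [List.map_cons, runSeq_cons]
    · rw [i2, hstep]
    · rw [i3, projH_step_liftR]
    · rw [i4, projK_step_liftR]
    · exact i5
    · rw [i6, hflag_step_liftR]

/-- Which check action to use for fluent `f` given final robot state `R` and final human
state `H`. -/
def chkFor (R H : Finset F) (f : F) : Act (LF F) :=
  if f ∈ R then (if f ∈ H then chk3 f else chk1 f)
  else (if f ∈ H then chk2 f else chk4 f)

/-- Simulate the check phase. -/
lemma buildK {MR MH : PModel F} {c : Act (LF F) → ℕ} :
    ∀ (L : List F) (s : Finset (LF F)),
    (∀ f ∈ L, f ∈ MR.fluents) → L.Nodup → (∀ f ∈ L, f ∉ projK s) →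
    LF.robotCanAct ∉ s → LF.humanCanAct ∉ s →
    ExecFrom (compiled MR MH c) s (L.map (chkFor (projR s) (projH s))) ∧
    projR (runSeq s (L.map (chkFor (projR s) (projH s)))) = projR s ∧
    projH (runSeq s (L.map (chkFor (projR s) (projH s)))) = projH s ∧
    projK (runSeq s (L.map (chkFor (projR s) (projH s)))) = projK s ∪ L.toFinset := by
  intro L
  induction L with
  | nil => intro s _ _ _ _ _; exact ⟨trivial, rfl, rfl, by simp [runSeq]⟩
  | cons f L ih =>
    rintro s hfl hnd hK hrf hhf
    have hfl0 : f ∈ MR.fluents := hfl f (by simp)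
    have hK0 : LF.compare f ∉ s := fun h => hK f (by simp) (mem_projK.mpr h)
    by_cases hR : f ∈ projR s <;> by_cases hH : f ∈ projH s
    · -- chk3
      have hchk : chkFor (projR s) (projH s) f = chk3 f := by simp [chkFor, hR, hH]
      have hexec : execAct s (chk3 f) :=
        exec_chk3.mpr ⟨mem_projR.mp hR, mem_projH.mp hH, hrf, hhf, hK0⟩
      obtain ⟨j1, j2, j3, j4⟩ := ih (stepAct s (chk3 f))
        (fun g hg => hfl g (by simp [hg])) (List.nodup_cons.mp hnd).2
        (by
          intro g hg
          rw [projK_step_chk3, Finset.mem_insert]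
          rintro (rfl | h)
          · exact (List.nodup_cons.mp hnd).1 hg
          · exact hK g (by simp [hg]) h)
        (by rw [rflag_step_chk3]; exact hrf) (by rw [hflag_step_chk3]; exact hhf)
      rw [projR_step_chk3, projH_step_chk3] at j1 j2 j3 j4
      rw [projK_step_chk3] at j4
      refine ⟨?_, ?_, ?_, ?_⟩
      · simp only [List.map_cons, hchk]
        exact ⟨mem_c_chk3 hfl0, hexec, j1⟩
      · simp only [List.map_cons, runSeq_cons, hchk]; exact j2
      · simp only [List.map_cons, runSeq_cons, hchk]; exact j3
      · simp only [List.map_cons, runSeq_cons, hchk]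
        rw [j4]
        ext x
        simp only [Finset.mem_union, Finset.mem_insert, List.toFinset_cons,
          List.mem_toFinset]
        tauto
    · -- chk1
      have hchk : chkFor (projR s) (projH s) f = chk1 f := by simp [chkFor, hR, hH]
      have hexec : execAct s (chk1 f) :=
        exec_chk1.mpr ⟨mem_projR.mp hR, fun h => hH (mem_projH.mpr h), hrf, hhf, hK0⟩
      obtain ⟨j1, j2, j3, j4⟩ := ih (stepAct s (chk1 f))
        (fun g hg => hfl g (by simp [hg])) (List.nodup_cons.mp hnd).2
        (by
          intro g hg
          rw [projK_step_chk1, Finset.mem_insert]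
          rintro (rfl | h)
          · exact (List.nodup_cons.mp hnd).1 hg
          · exact hK g (by simp [hg]) h)
        (by rw [rflag_step_chk1]; exact hrf) (by rw [hflag_step_chk1]; exact hhf)
      rw [projR_step_chk1, projH_step_chk1] at j1 j2 j3 j4
      rw [projK_step_chk1] at j4
      refine ⟨?_, ?_, ?_, ?_⟩
      · simp only [List.map_cons, hchk]
        exact ⟨mem_c_chk1 hfl0, hexec, j1⟩
      · simp only [List.map_cons, runSeq_cons, hchk]; exact j2
      · simp only [List.map_cons, runSeq_cons, hchk]; exact j3
      · simp only [List.map_cons, runSeq_cons, hchk]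
        rw [j4]
        ext x
        simp only [Finset.mem_union, Finset.mem_insert, List.toFinset_cons,
          List.mem_toFinset]
        tauto
    · -- chk2
      have hchk : chkFor (projR s) (projH s) f = chk2 f := by simp [chkFor, hR, hH]
      have hexec : execAct s (chk2 f) :=
        exec_chk2.mpr ⟨mem_projH.mp hH, fun h => hR (mem_projR.mpr h), hrf, hhf, hK0⟩
      obtain ⟨j1, j2, j3, j4⟩ := ih (stepAct s (chk2 f))
        (fun g hg => hfl g (by simp [hg])) (List.nodup_cons.mp hnd).2
        (by
          intro g hg
          rw [projK_step_chk2, Finset.mem_insert]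
          rintro (rfl | h)
          · exact (List.nodup_cons.mp hnd).1 hg
          · exact hK g (by simp [hg]) h)
        (by rw [rflag_step_chk2]; exact hrf) (by rw [hflag_step_chk2]; exact hhf)
      rw [projR_step_chk2, projH_step_chk2] at j1 j2 j3 j4
      rw [projK_step_chk2] at j4
      refine ⟨?_, ?_, ?_, ?_⟩
      · simp only [List.map_cons, hchk]
        exact ⟨mem_c_chk2 hfl0, hexec, j1⟩
      · simp only [List.map_cons, runSeq_cons, hchk]; exact j2
      · simp only [List.map_cons, runSeq_cons, hchk]; exact j3
      · simp only [List.map_cons, runSeq_cons, hchk]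
        rw [j4]
        ext x
        simp only [Finset.mem_union, Finset.mem_insert, List.toFinset_cons,
          List.mem_toFinset]
        tauto
    · -- chk4
      have hchk : chkFor (projR s) (projH s) f = chk4 f := by simp [chkFor, hR, hH]
      have hexec : execAct s (chk4 f) :=
        exec_chk4.mpr ⟨fun h => hR (mem_projR.mpr h), fun h => hH (mem_projH.mpr h),
          hrf, hhf, hK0⟩
      obtain ⟨j1, j2, j3, j4⟩ := ih (stepAct s (chk4 f))
        (fun g hg => hfl g (by simp [hg])) (List.nodup_cons.mp hnd).2
        (by
          intro g hg
          rw [projK_step_chk4, Finset.mem_insert]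
          rintro (rfl | h)
          · exact (List.nodup_cons.mp hnd).1 hg
          · exact hK g (by simp [hg]) h)
        (by rw [rflag_step_chk4]; exact hrf) (by rw [hflag_step_chk4]; exact hhf)
      rw [projR_step_chk4, projH_step_chk4] at j1 j2 j3 j4
      rw [projK_step_chk4] at j4
      refine ⟨?_, ?_, ?_, ?_⟩
      · simp only [List.map_cons, hchk]
        exact ⟨mem_c_chk4 hfl0, hexec, j1⟩
      · simp only [List.map_cons, runSeq_cons, hchk]; exact j2
      · simp only [List.map_cons, runSeq_cons, hchk]; exact j3
      · simp only [List.map_cons, runSeq_cons, hchk]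
        rw [j4]
        ext x
        simp only [Finset.mem_union, Finset.mem_insert, List.toFinset_cons,
          List.mem_toFinset]
        tauto


variable {F : Type} [DecidableEq F] [Fintype F]

lemma imageK_subset {t : Finset F} {s : Finset (LF F)} :
    t.image LF.compare ⊆ s ↔ t ⊆ projK s := by
  simp [Finset.image_subset_iff, Finset.subset_iff]

lemma projR_init {MR MH : PModel F} {c : Act (LF F) → ℕ} :
    projR ((compiled MR MH c).init) = MR.init := by
  ext f; simp [compiled]
lemma projH_init {MR MH : PModel F} {c : Act (LF F) → ℕ} :
    projH ((compiled MR MH c).init) = MH.init := by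
  ext f; simp [compiled]
lemma projK_init {MR MH : PModel F} {c : Act (LF F) → ℕ} :
    projK ((compiled MR MH c).init) = ∅ := by
  ext f; simp [compiled]
lemma hflag_init {MR MH : PModel F} {c : Act (LF F) → ℕ} :
    LF.humanCanAct ∈ (compiled MR MH c).init := by
  simp [compiled]
lemma rflag_init {MR MH : PModel F} {c : Act (LF F) → ℕ} :
    LF.robotCanAct ∉ (compiled MR MH c).init := by
  simp [compiled]

lemma sum_map_one {α : Type*} (c : α → ℕ) :
    ∀ (π : List α), (∀ a ∈ π, c a = 1) → (π.map c).sum = π.length := by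
  intro π
  induction π with
  | nil => intro _; rfl
  | cons a l ih =>
    intro h
    simp only [List.map_cons, List.sum_cons, List.length_cons, h a (by simp),
      ih (fun b hb => h b (by simp [hb]))]
    omega

lemma sum_chk_cost {MR : PModel F} {c : Act (LF F) → ℕ} {P2 : ℕ}
    (hcAgr : ∀ f ∈ MR.fluents, c (chk3 f) = 0 ∧ c (chk4 f) = 0)
    (hcDis : ∀ f ∈ MR.fluents, c (chk1 f) = P2 ∧ c (chk2 f) = P2)
    (R H : Finset F) :
    ∀ (L : List F), L.Nodup → (∀ f ∈ L, f ∈ MR.fluents) →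
    ((L.map (chkFor R H)).map c).sum =
      P2 * (L.toFinset ∩ ((R \ H) ∪ (H \ R))).card := by
  intro L
  induction L with
  | nil => intro _ _; simp
  | cons f L ih =>
    intro hnd hfl
    have hf0 : f ∈ MR.fluents := hfl f (by simp)
    have hnotmem : f ∉ L.toFinset := by
      simpa using (List.nodup_cons.mp hnd).1
    have hrest := ih (List.nodup_cons.mp hnd).2 (fun g hg => hfl g (by simp [hg]))
    have hcost : c (chkFor R H f) =
        if f ∈ (R \ H) ∪ (H \ R) then P2 else 0 := by
      by_cases hR : f ∈ R <;> by_cases hH : f ∈ H <;>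
        simp [chkFor, hR, hH, (hcAgr f hf0).1, (hcAgr f hf0).2,
          (hcDis f hf0).1, (hcDis f hf0).2]
    simp only [List.map_cons, List.sum_cons, hrest, hcost, List.toFinset_cons]
    rw [card_insert_inter hnotmem]
    by_cases hD : f ∈ (R \ H) ∪ (H \ R) <;> simp [hD, Nat.mul_add]

/-- From a pair of plans, build a plan in the compiled model with the announced cost. -/
lemma buildPlan {MR MH : PModel F} {c : Act (LF F) → ℕ} {P2 : ℕ}
    (hsh : MH.fluents = MR.fluents)
    (hwfR : WellFormed MR) (hwfH : WellFormed MH)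
    (hcR : ∀ a ∈ MR.actions, c (liftR a) = 1)
    (hcH : ∀ a ∈ MH.actions, c (liftH a) = 1)
    (hcFlipH : c (flipH MH) = 0) (hcFlipR : c (flipR MR) = 0)
    (hcAgr : ∀ f ∈ MR.fluents, c (chk3 f) = 0 ∧ c (chk4 f) = 0)
    (hcDis : ∀ f ∈ MR.fluents, c (chk1 f) = P2 ∧ c (chk2 f) = P2)
    (π1 π2 : List (Act F)) (h1 : IsPlan MR π1) (h2 : IsPlan MH π2) :
    ∃ pl, IsPlan (compiled MR MH c) pl ∧
      planCost (compiled MR MH c) pl = π2.length + π1.length +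
        P2 * ((runSeq MR.init π1 \ runSeq MH.init π2) ∪
              (runSeq MH.init π2 \ runSeq MR.init π1)).card := by
  set M := compiled MR MH c with hM
  set R := runSeq MR.init π1 with hR
  set H := runSeq MH.init π2 with hHdef
  have hRfl : R ⊆ MR.fluents := runSeq_subset hwfR π1 MR.init hwfR.1 h1.1
  have hHfl : H ⊆ MR.fluents := by
    rw [← hsh]; exact runSeq_subset hwfH π2 MH.init hwfH.1 h2.1
  -- phase 1
  obtain ⟨a1, a2, a3, a4, a5, a6⟩ := buildH (MR := MR) (c := c) π2 M.init
    (by rw [projH_init]; exact h2.1) hflag_init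
  set s1 := runSeq M.init (π2.map liftH) with hs1
  rw [projH_init] at a2
  rw [projR_init] at a3
  rw [projK_init] at a4
  have hrf1 : LF.robotCanAct ∉ s1 := fun h => rflag_init (a5.mp h)
  -- flipH
  set s2 := stepAct s1 (flipH MH) with hs2
  have hexf1 : execAct s1 (flipH MH) := exec_flipH.mpr ⟨by rw [a2]; exact h2.2, a6⟩
  have c2R : projR s2 = MR.init := by rw [hs2, projR_step_flipH, a3]
  have c2H : projH s2 = H := by rw [hs2, projH_step_flipH, a2]
  have c2K : projK s2 = ∅ := by rw [hs2, projK_step_flipH, a4]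
  have c2r : LF.robotCanAct ∈ s2 := rflag_step_flipH s1 MH
  have c2h : LF.humanCanAct ∉ s2 := hflag_step_flipH s1 MH
  -- phase 2
  obtain ⟨b1, b2, b3, b4, b5, b6⟩ := buildR (MH := MH) (c := c) π1 s2
    (by rw [c2R]; exact h1.1) c2r
  set s3 := runSeq s2 (π1.map liftR) with hs3
  rw [c2R] at b2
  rw [c2H] at b3
  rw [c2K] at b4
  have c3h : LF.humanCanAct ∉ s3 := fun h => c2h (b6.mp h)
  -- flipR
  set s4 := stepAct s3 (flipR MR) with hs4
  have hexf2 : execAct s3 (flipR MR) := exec_flipR.mpr ⟨by rw [b2]; exact h1.2, b5⟩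
  have c4R : projR s4 = R := by rw [hs4, projR_step_flipR, b2]
  have c4H : projH s4 = H := by rw [hs4, projH_step_flipR, b3]
  have c4K : projK s4 = ∅ := by rw [hs4, projK_step_flipR, b4]
  have c4r : LF.robotCanAct ∉ s4 := rflag_step_flipR s3 MR
  have c4h : LF.humanCanAct ∉ s4 := by rw [hs4, hflag_step_flipR]; exact c3h
  -- checks
  obtain ⟨k1, k2, k3, k4⟩ := buildK (MR := MR) (MH := MH) (c := c) MR.fluents.toList s4
    (fun f hf => Finset.mem_toList.mp hf) MR.fluents.nodup_toList
    (fun f _ => by rw [c4K]; exact Finset.notMem_empty f) c4r c4h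
  rw [c4R, c4H] at k1 k2 k3 k4
  set checks := MR.fluents.toList.map (chkFor R H) with hchecks
  set s5 := runSeq s4 checks with hs5
  rw [c4K, Finset.empty_union, Finset.toList_toFinset] at k4
  -- the full plan
  refine ⟨(π2.map liftH) ++ flipH MH :: ((π1.map liftR) ++ flipR MR :: checks), ?_, ?_⟩
  · constructor
    · rw [execFrom_append]
      refine ⟨a1, mem_c_flipH, hexf1, ?_⟩
      rw [execFrom_append]
      exact ⟨b1, mem_c_flipR, hexf2, k1⟩
    · have hfinal : runSeq M.init
          ((π2.map liftH) ++ flipH MH :: ((π1.map liftR) ++ flipR MR :: checks)) = s5 := by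
        rw [runSeq_append, runSeq_cons, runSeq_append, runSeq_cons]
      rw [hfinal]
      have hgoal : M.goal = MR.goal.image LF.robot ∪ MH.goal.image LF.human ∪
          MR.fluents.image LF.compare := rfl
      rw [hgoal]
      refine Finset.union_subset (Finset.union_subset ?_ ?_) ?_
      · rw [imageR_subset, k2]; exact h1.2
      · rw [imageH_subset, k3]; exact h2.2
      · rw [imageK_subset, k4]
  · have hcost_cons : ∀ (a : Act (LF F)) (l : List (Act (LF F))),
        planCost M (a :: l) = c a + planCost M l := by
      intro a l; simp [planCost, hM, compiled]
    have hΔ : (R \ H) ∪ (H \ R) ⊆ MR.fluents :=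
      Finset.union_subset (fun x hx => hRfl (Finset.mem_sdiff.mp hx).1)
        (fun x hx => hHfl (Finset.mem_sdiff.mp hx).1)
    have e1 : planCost M (π2.map liftH) = π2.length := by
      show ((π2.map liftH).map M.cost).sum = _
      rw [List.map_map]
      rw [show M.cost = c from rfl]
      exact sum_map_one (c ∘ liftH) π2
        (fun b hb => hcH b (execFrom_actions π2 MH.init h2.1 b hb))
    have e2 : planCost M (π1.map liftR) = π1.length := by
      show ((π1.map liftR).map M.cost).sum = _
      rw [List.map_map]
      rw [show M.cost = c from rfl]
      exact sum_map_one (c ∘ liftR) π1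
        (fun b hb => hcR b (execFrom_actions π1 MR.init h1.1 b hb))
    have e3 : planCost M checks = P2 * ((R \ H) ∪ (H \ R)).card := by
      show ((MR.fluents.toList.map (chkFor R H)).map M.cost).sum = _
      rw [show M.cost = c from rfl]
      rw [sum_chk_cost hcAgr hcDis R H MR.fluents.toList MR.fluents.nodup_toList
        (fun f hf => Finset.mem_toList.mp hf)]
      rw [Finset.toList_toFinset, Finset.inter_eq_right.mpr hΔ]
    rw [planCost_append, hcost_cons, planCost_append, hcost_cons, e1, e2, e3,
      hcFlipH, hcFlipR]
    omega

variable {F : Type} [DecidableEq F] [Fintype F]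

lemma cost_lower {MR : PModel F} {c : Act (LF F) → ℕ} {P2 : ℕ}
    (hcDis : ∀ f ∈ MR.fluents, c (chk1 f) = P2 ∧ c (chk2 f) = P2) :
    ∀ l : List (Act (LF F)), P2 * l.countP (disP MR) ≤ (l.map c).sum := by
  intro l
  induction l with
  | nil => simp
  | cons a l ih =>
    rw [List.countP_cons, List.map_cons, List.sum_cons]
    by_cases h : disP MR a = true
    · have hca : c a = P2 := by
        have h2 : ∃ f ∈ MR.fluents, a = chk1 f ∨ a = chk2 f := by
          simpa [disP] using h
        rcases h2 with ⟨f, hf, rfl | rfl⟩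
        exacts [(hcDis f hf).1, (hcDis f hf).2]
      rw [h, show (if true = true then 1 else 0) = 1 from rfl,
        Nat.mul_add, Nat.mul_one, hca]
      omega
    · rw [if_neg h, Nat.add_zero]
      omega



/-- Proposition 4: in the compiled model `M^λ`, give all robot and
human-copy actions unit cost, the flip actions zero cost, each check agreement action cost
`P1 = 0`, and each check disagreement action cost `P2 > 2^{|F^R|+|F^H|}`. Then any
cost-optimal plan `π^λ` of `M^λ` satisfies `|κ⁻(π^λ)| = GD↓(M^R, M^H)`. -/
theorem prop4_gddown_via_compilation {F : Type} [DecidableEq F] [Fintype F]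
    (MR MH : PModel F) (c : Act (LF F) → ℕ) (P2 : ℕ)
    (hsh : MH.fluents = MR.fluents)
    (hwfR : WellFormed MR) (hwfH : WellFormed MH)
    (hcR : ∀ a ∈ MR.actions, c (liftR a) = 1)
    (hcH : ∀ a ∈ MH.actions, c (liftH a) = 1)
    (hcFlipH : c (flipH MH) = 0) (hcFlipR : c (flipR MR) = 0)
    (hcAgr : ∀ f ∈ MR.fluents, c (chk3 f) = 0 ∧ c (chk4 f) = 0)
    (hcDis : ∀ f ∈ MR.fluents, c (chk1 f) = P2 ∧ c (chk2 f) = P2)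
    (hP2 : P2 > 2 ^ (MR.fluents.card + MH.fluents.card))
    (π : List (Act (LF F))) (hπ : IsOptimal (compiled MR MH c) π) :
    disCount MR π = GDdown MR MH := by
  obtain ⟨⟨hex, hgsub⟩, hopt⟩ := hπ
  rcases MR.fluents.eq_empty_or_nonempty with hemp | ⟨f0, hf0⟩
  · -- degenerate case: no fluents at all
    have hzero : disCount MR π = 0 := by
      rw [disCount_eq_countP, List.countP_eq_zero]
      intro a _
      simp [disP, hemp]
    have hgoalR : MR.goal = ∅ := Finset.subset_empty.mp (hemp ▸ hwfR.2.1)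
    have hgoalH : MH.goal = ∅ := Finset.subset_empty.mp (hemp ▸ hsh ▸ hwfH.2.1)
    have hinitR : MR.init = ∅ := Finset.subset_empty.mp (hemp ▸ hwfR.1)
    have hinitH : MH.init = ∅ := Finset.subset_empty.mp (hemp ▸ hsh ▸ hwfH.1)
    have hmem0 : (0 : ℕ) ∈ gsdVals MR MH := by
      refine ⟨[], [], ⟨trivial, by rw [hgoalR]; exact Finset.empty_subset _⟩,
        ⟨trivial, by rw [hgoalH]; exact Finset.empty_subset _⟩, ?_⟩
      show 0 = (GSD MR MH [] []).card
      rw [GSD]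
      show 0 = ((MR.init \ MH.init) ∪ (MH.init \ MR.init)).card
      rw [hinitR, hinitH]
      simp
    have : GDdown MR MH = 0 := Nat.le_zero.mp (Nat.sInf_le hmem0)
    rw [hzero, this]
  · -- main case
    have hg : LF.compare f0 ∈ runSeq (compiled MR MH c).init π := by
      apply hgsub
      show LF.compare f0 ∈ MR.goal.image LF.robot ∪ MH.goal.image LF.human ∪
        MR.fluents.image LF.compare
      exact Finset.mem_union_right _ (Finset.mem_image_of_mem _ hf0)
    obtain ⟨πH, πR, e1, e2, e3, e4, e5, e6, e7⟩ :=
      extractH π (compiled MR MH c).init hex hflag_init rflag_init projK_init hg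
    rw [projH_init] at e1 e2 e6 e7
    rw [projR_init] at e3 e4 e5 e7
    set Rf := runSeq MR.init πR with hRf
    set Hf := runSeq MH.init πH with hHf
    have hRsub : Rf ⊆ MR.fluents := runSeq_subset hwfR πR MR.init hwfR.1 e3
    have hHsub : Hf ⊆ MR.fluents := by
      rw [← hsh]; exact runSeq_subset hwfH πH MH.init hwfH.1 e1
    have hKfull : MR.fluents ⊆ projK (runSeq (compiled MR MH c).init π) := by
      rw [← imageK_subset]
      intro x hx
      apply hgsub
      show x ∈ MR.goal.image LF.robot ∪ MH.goal.image LF.human ∪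
        MR.fluents.image LF.compare
      exact Finset.mem_union_right _ hx
    have hΔsub : (Rf \ Hf) ∪ (Hf \ Rf) ⊆ projK (runSeq (compiled MR MH c).init π) := by
      refine subset_trans ?_ hKfull
      exact Finset.union_subset (fun x hx => hRsub (Finset.mem_sdiff.mp hx).1)
        (fun x hx => hHsub (Finset.mem_sdiff.mp hx).1)
    have hdis : disCount MR π = ((Rf \ Hf) ∪ (Hf \ Rf)).card := by
      rw [disCount_eq_countP, e7, Finset.inter_eq_right.mpr hΔsub]
    have hmemval : ((Rf \ Hf) ∪ (Hf \ Rf)).card ∈ gsdVals MR MH :=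
      ⟨πR, πH, ⟨e3, e4⟩, ⟨e1, e2⟩, rfl⟩
    have hlow : GDdown MR MH ≤ disCount MR π := by
      rw [hdis]; exact Nat.sInf_le hmemval
    -- upper bound via an explicitly constructed cheap plan
    obtain ⟨π1, π2, hp1, hp2, hdval⟩ := Nat.sInf_mem (s := gsdVals MR MH) ⟨_, hmemval⟩
    obtain ⟨π1', hp1', hrun1, hlen1⟩ := exists_short_plan hwfR π1.length π1 le_rfl hp1
    obtain ⟨π2', hp2', hrun2, hlen2⟩ := exists_short_plan hwfH π2.length π2 le_rfl hp2
    obtain ⟨pl, hpl, hplcost⟩ := buildPlan hsh hwfR hwfH hcR hcH hcFlipH hcFlipR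
      hcAgr hcDis π1' π2' hp1' hp2'
    have hd' : ((runSeq MR.init π1' \ runSeq MH.init π2') ∪
        (runSeq MH.init π2' \ runSeq MR.init π1')).card = GDdown MR MH := by
      rw [hrun1, hrun2]
      unfold GDdown
      rw [hdval]
      rfl
    rw [hd'] at hplcost
    have hP2pos : 0 < P2 := lt_of_le_of_lt (Nat.zero_le _) hP2
    have hlensum : π1'.length + π2'.length < P2 := by
      have h1 : (1 : ℕ) ≤ 2 ^ MR.fluents.card := Nat.one_le_two_pow
      have h2 : (1 : ℕ) ≤ 2 ^ MH.fluents.card := Nat.one_le_two_pow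
      have h3 : 2 ^ MR.fluents.card * 2 ^ MH.fluents.card =
          2 ^ (MR.fluents.card + MH.fluents.card) := (pow_add 2 _ _).symm
      nlinarith [hlen1, hlen2, hP2]
    have hcostπ : P2 * disCount MR π ≤ planCost (compiled MR MH c) π := by
      rw [disCount_eq_countP]
      exact cost_lower hcDis π
    have hchain : planCost (compiled MR MH c) π ≤ planCost (compiled MR MH c) pl :=
      hopt pl hpl
    have hfin : P2 * disCount MR π < P2 * (GDdown MR MH + 1) := by
      calc P2 * disCount MR π ≤ planCost (compiled MR MH c) pl :=
            le_trans hcostπ hchain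
        _ = π2'.length + π1'.length + P2 * GDdown MR MH := hplcost
        _ < P2 + P2 * GDdown MR MH := by omega
        _ = P2 * (GDdown MR MH + 1) := by ring
    have hup : disCount MR π ≤ GDdown MR MH := by
      have := Nat.lt_of_mul_lt_mul_left hfin
      omega
    omega
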